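/- arXiv:1904.07455 — 3 statements merged into one kernel-verified Lean document; each statement's English description precedes it below -/
import Mathlib

section
/- Let k be a field and A a commutative Hopf algebra over k that is not finitely generated as a k-algebra. Then the following three cardinals are equal: (1) the dimension of A as a k-vector space; (2) the least cardinality of a subset of A that generates A as a k-algebra; (3) the least cardinal κ for which there exists a family of κ finitely generated Hopf subalgebras of A, directed under inclusion, whose union is A. -/
open TensorProduct

section Prelim

variable (k : Type) [Field k]

/-- Bundled commutative Hopf algebra over `k`. -/
structure HopfAlg where
  carrier : Type
  [instCommRing : CommRing carrier]
  [instHopf : HopfAlgebra k carrier]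

attribute [instance] HopfAlg.instCommRing HopfAlg.instHopf

variable {k}

/-- `B` is a Hopf subalgebra of `A`: the comultiplication maps `B` into the image of
`B ⊗ B` in `A ⊗ A` and the antipode maps `B` into `B`. -/
def IsHopfSubalgebra {A : Type} [CommRing A] [HopfAlgebra k A]
    (B : Subalgebra k A) : Prop :=
  (∀ b ∈ B, Coalgebra.comul (R := k) b ∈
      LinearMap.range (TensorProduct.map B.val.toLinearMap B.val.toLinearMap)) ∧
  (∀ b ∈ B, HopfAlgebra.antipode (R := k) b ∈ B)

/-- A Hopf algebra homomorphism: a `k`-algebra homomorphism commuting with the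
comultiplications. -/
def IsHopfHom {A B : Type} [CommRing A] [HopfAlgebra k A]
    [CommRing B] [HopfAlgebra k B] (f : A →ₐ[k] B) : Prop :=
  ∀ a : A, Coalgebra.comul (R := k) (f a) =
    TensorProduct.map f.toLinearMap f.toLinearMap (Coalgebra.comul (R := k) a)

/-- A Hopf ideal of `A`: the counit vanishes on `I`, the comultiplication maps `I` into
`I ⊗ A + A ⊗ I`, and the antipode maps `I` into `I`. -/
def IsHopfIdeal (k : Type) [Field k] {A : Type} [CommRing A] [HopfAlgebra k A]
    (I : Ideal A) : Prop :=
  (∀ a ∈ I, Coalgebra.counit (R := k) a = 0) ∧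
  (∀ a ∈ I, Coalgebra.comul (R := k) a ∈
      LinearMap.range (TensorProduct.map (Submodule.restrictScalars k I).subtype
        (LinearMap.id : A →ₗ[k] A)) ⊔
      LinearMap.range (TensorProduct.map (LinearMap.id : A →ₗ[k] A)
        (Submodule.restrictScalars k I).subtype)) ∧
  (∀ a ∈ I, HopfAlgebra.antipode (R := k) a ∈ I)

/-- A subalgebra `S` of `A` "belongs to the class `𝒞`" if some member of `𝒞` maps onto `S`
by an injective Hopf algebra homomorphism into `A`. -/
def MemFormation (𝒞 : Set (HopfAlg k)) {A : Type} [CommRing A]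
    [HopfAlgebra k A] (S : Subalgebra k A) : Prop :=
  ∃ D ∈ 𝒞, ∃ f : D.carrier →ₐ[k] A, IsHopfHom f ∧ Function.Injective f ∧ f.range = S

/-- A formation of (coordinate rings of) algebraic groups, Hopf-encoded. -/
structure IsFormation (𝒞 : Set (HopfAlg k)) : Prop where
  fg : ∀ B ∈ 𝒞, (⊤ : Subalgebra k B.carrier).FG
  nontrivial : ∃ B ∈ 𝒞, ¬ Function.Surjective (algebraMap k B.carrier)
  iso_closed : ∀ B ∈ 𝒞, ∀ B' : HopfAlg k,
    (∃ e : B.carrier ≃ₐ[k] B'.carrier, IsHopfHom e.toAlgHom) → B' ∈ 𝒞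
  sub_closed : ∀ B ∈ 𝒞, ∀ S : Subalgebra k B.carrier,
    IsHopfSubalgebra S → MemFormation 𝒞 S
  sup_closed : ∀ (A : HopfAlg k) (B₁ B₂ : Subalgebra k A.carrier),
    IsHopfSubalgebra B₁ → IsHopfSubalgebra B₂ →
    MemFormation 𝒞 B₁ → MemFormation 𝒞 B₂ → MemFormation 𝒞 (B₁ ⊔ B₂)

/-- `A` is pro-`𝒞`: every finitely generated Hopf subalgebra of `A` belongs to `𝒞`. -/
def IsProC (𝒞 : Set (HopfAlg k)) (A : Type) [CommRing A] [HopfAlgebra k A] : Prop :=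
  ∀ S : Subalgebra k A, S.FG → IsHopfSubalgebra S → MemFormation 𝒞 S

/-- The family `ι` of `k`-algebra homomorphisms `A → R` converges to `1`. -/
def ConvergesToOne {A : Type} [CommRing A] [HopfAlgebra k A]
    {R : Type} [CommRing R] [Algebra k R] {X : Type} (ι : X → (A →ₐ[k] R)) : Prop :=
  ∀ S : Subalgebra k A, S.FG → IsHopfSubalgebra S →
    {x : X | ∃ a ∈ S, ι x a ≠ algebraMap k R (Coalgebra.counit (R := k) a)}.Finite

/-- The only Hopf ideal of `A` contained in the intersection of the kernels of the `ι x`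
is the zero ideal. -/
def HopfGenerates {A : Type} [CommRing A] [HopfAlgebra k A]
    {R : Type} [CommRing R] [Algebra k R] {X : Type} (ι : X → (A →ₐ[k] R)) : Prop :=
  ∀ I : Ideal A, IsHopfIdeal k I → (∀ x : X, I ≤ RingHom.ker (ι x).toRingHom) → I = ⊥

/-- `(A, ι)` is the free pro-`𝒞` group on `X` over `R`. -/
structure IsFreeProC (𝒞 : Set (HopfAlg k)) (R : Type) [CommRing R] [Algebra k R]
    (X : Type) (A : Type) [CommRing A] [HopfAlgebra k A]
    (ι : X → (A →ₐ[k] R)) : Prop where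
  proC : IsProC 𝒞 A
  conv : ConvergesToOne ι
  gen : HopfGenerates ι
  univ : ∀ (A' : HopfAlg k) (φ : X → (A'.carrier →ₐ[k] R)),
    ConvergesToOne φ → HopfGenerates φ →
    ∃! u : A'.carrier →ₐ[k] A, IsHopfHom u ∧ ∀ x : X, φ x = (ι x).comp u

/-- `A` is a saturated pro-`𝒞` Hopf algebra: every nontrivial pro-`𝒞` embedding problem
with the appropriate size restrictions has a solution. -/
def IsSaturated (𝒞 : Set (HopfAlg k)) (A : Type) [CommRing A] [HopfAlgebra k A] : Prop :=
  ∀ (B C : HopfAlg k) (f : C.carrier →ₐ[k] B.carrier) (g : C.carrier →ₐ[k] A),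
    IsHopfHom f → IsHopfHom g → Function.Injective f → Function.Injective g →
    ¬ Function.Surjective f → IsProC 𝒞 B.carrier →
    ((⊤ : Subalgebra k C.carrier).FG ∨ Module.rank k C.carrier < Module.rank k A) →
    ((⊤ : Subalgebra k B.carrier).FG ∨ Module.rank k B.carrier ≤ Module.rank k A) →
    ∃ h : B.carrier →ₐ[k] A, IsHopfHom h ∧ Function.Injective h ∧ h.comp f = g

end Prelim

/-!
Over a field, every element `a` of a coalgebra `C` lies in a finite-dimensional subcoalgebra `V`,
the span of the two-sided slices `(f ⊗ id ⊗ g)(Δ² a)`: by coassociativity `V` is stable under the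
one-sided slices, which forces `Δ V ⊆ (V ⊗ C) ∩ (C ⊗ V) = V ⊗ V`. In a commutative Hopf algebra
the antipode `S` is an involutive algebra map with `Δ ∘ S = τ ∘ (S ⊗ S) ∘ Δ`, so the algebra
generated by `V + S V` is a finitely generated Hopf subalgebra containing `a`. Finite sups of
these, one for each finite set of basis vectors, form a directed cover of `A` indexed by a set of
cardinality `dim A`.

Conversely, a basis generates `A`, and a generating set `S` is infinite and spans `A` by its
monomials, so `dim A ≤ max |S| ℵ₀ = |S|`; the generators of a cover by `κ` finitely generated
subalgebras form a generating set of size at most `κ · ℵ₀`, whence `dim A ≤ κ`.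
-/

section TensorSlices
variable {R M N : Type*} [CommSemiring R] [AddCommMonoid M] [Module R M] [AddCommMonoid N]
  [Module R N]

theorem exists_fg_forall_rid_lTensor_mem (t : M ⊗[R] N) :
    ∃ W : Submodule R M, W.FG ∧ ∀ g : N →ₗ[R] R, TensorProduct.rid R M (g.lTensor M t) ∈ W := by
  induction t using TensorProduct.induction_on with
  | zero => exact ⟨⊥, Submodule.fg_bot, by simp⟩
  | tmul m n =>
    exact ⟨R ∙ m, Submodule.fg_span_singleton m, fun g => by
      simpa using Submodule.smul_mem _ (g n) (Submodule.mem_span_singleton_self m)⟩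
  | add t₁ t₂ h₁ h₂ =>
    obtain ⟨W₁, hW₁, h₁⟩ := h₁
    obtain ⟨W₂, hW₂, h₂⟩ := h₂
    exact ⟨W₁ ⊔ W₂, hW₁.sup hW₂, fun g => by
      simpa using Submodule.add_mem_sup (h₁ g) (h₂ g)⟩

theorem rid_lTensor_comm (f : M →ₗ[R] R) (t : M ⊗[R] N) :
    TensorProduct.rid R N (f.lTensor N (TensorProduct.comm R M N t)) =
      TensorProduct.lid R N (f.rTensor N t) := by
  induction t using TensorProduct.induction_on <;> simp_all

theorem exists_fg_forall_lid_rTensor_mem (t : M ⊗[R] N) :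
    ∃ W : Submodule R N, W.FG ∧ ∀ f : M →ₗ[R] R, TensorProduct.lid R N (f.rTensor N t) ∈ W := by
  simpa only [rid_lTensor_comm] using exists_fg_forall_rid_lTensor_mem (TensorProduct.comm R M N t)

end TensorSlices

section FieldTensor
variable {k M N : Type*} [Field k] [AddCommGroup M] [Module k M] [AddCommGroup N] [Module k N]

theorem mem_range_rTensor_subtype_of_forall (V : Submodule k M) {t : M ⊗[k] N}
    (h : ∀ g : N →ₗ[k] k, TensorProduct.rid k M (g.lTensor M t) ∈ V) :
    t ∈ LinearMap.range (V.subtype.rTensor N) := by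
  classical
  let b := Module.Basis.ofVectorSpace k N
  let e := TensorProduct.equivFinsuppOfBasisRight (M := M) b
  have he : ∀ i, e t i ∈ V := fun i => by
    rw [TensorProduct.equivFinsuppOfBasisRight_apply]; exact h _
  refine ⟨(e t).sum fun i _ => (⟨e t i, he i⟩ : V) ⊗ₜ b i, ?_⟩
  conv_rhs => rw [← e.symm_apply_apply t, TensorProduct.equivFinsuppOfBasisRight_symm_apply]
  simp [Finsupp.sum]

theorem mem_range_lTensor_subtype_of_forall (W : Submodule k N) {t : M ⊗[k] N}
    (h : ∀ f : M →ₗ[k] k, TensorProduct.lid k N (f.rTensor N t) ∈ W) :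
    t ∈ LinearMap.range (W.subtype.lTensor M) := by
  obtain ⟨u, hu⟩ := mem_range_rTensor_subtype_of_forall W (t := TensorProduct.comm k M N t)
    (fun f => by simpa only [rid_lTensor_comm] using h f)
  refine ⟨TensorProduct.comm k W M u, ?_⟩
  rw [← (TensorProduct.comm k M N).injective.eq_iff, ← hu]
  clear hu
  induction u using TensorProduct.induction_on <;> simp_all

theorem mem_range_map_subtype_of_mem_range_rTensor_of_mem_range_lTensor
    (V : Submodule k M) (W : Submodule k N) {t : M ⊗[k] N}
    (hV : t ∈ LinearMap.range (V.subtype.rTensor N))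
    (hW : t ∈ LinearMap.range (W.subtype.lTensor M)) :
    t ∈ LinearMap.range (TensorProduct.map V.subtype W.subtype) := by
  obtain ⟨u, rfl⟩ := hV
  obtain ⟨w, hw⟩ := hW
  obtain ⟨W', hWW'⟩ := W.exists_isCompl
  let p := W.projectionOnto W' hWW'
  have hp : W.subtype ∘ₗ p ∘ₗ W.subtype = W.subtype := by
    ext; simp [p, Submodule.projectionOnto_apply_left]
  refine ⟨p.lTensor V u, ?_⟩
  calc TensorProduct.map V.subtype W.subtype (p.lTensor V u)
      = (W.subtype ∘ₗ p).lTensor M (V.subtype.rTensor N u) := by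
        rw [← LinearMap.comp_apply, ← LinearMap.comp_apply]; congr 1; ext; simp
    _ = V.subtype.rTensor N u := by
        rw [← hw, ← LinearMap.comp_apply, ← LinearMap.lTensor_comp, LinearMap.comp_assoc, hp]
end FieldTensor

section Slices
open Coalgebra
variable {k C : Type*} [CommSemiring k] [AddCommMonoid C] [Module k C] [Coalgebra k C]

noncomputable def sliceRight (g : C →ₗ[k] k) : C →ₗ[k] C :=
  (TensorProduct.rid k C).toLinearMap ∘ₗ g.lTensor C ∘ₗ comul

noncomputable def sliceLeft (f : C →ₗ[k] k) : C →ₗ[k] C :=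
  (TensorProduct.lid k C).toLinearMap ∘ₗ f.rTensor C ∘ₗ comul

theorem comul_sliceRight (g : C →ₗ[k] k) (c : C) :
    comul (R := k) (sliceRight g c) = (sliceRight g).lTensor C (comul c) := by
  have hnat : comul ∘ₗ (TensorProduct.rid k C).toLinearMap ∘ₗ g.lTensor C =
      (TensorProduct.rid k (C ⊗[k] C)).toLinearMap ∘ₗ g.lTensor (C ⊗[k] C) ∘ₗ
        (comul (R := k) (A := C)).rTensor C := by
    ext; simp
  have hassoc : (TensorProduct.rid k (C ⊗[k] C)).toLinearMap ∘ₗ g.lTensor (C ⊗[k] C) ∘ₗ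
      (TensorProduct.assoc k C C C).symm.toLinearMap =
      ((TensorProduct.rid k C).toLinearMap ∘ₗ g.lTensor C).lTensor C := by
    ext; simp
  calc comul (sliceRight g c)
      = TensorProduct.rid k (C ⊗[k] C) (g.lTensor (C ⊗[k] C) ((TensorProduct.assoc k C C C).symm
          ((comul (R := k) (A := C)).lTensor C (comul c)))) := by
        rw [coassoc_symm_apply]; exact congr($hnat (comul c))
    _ = _ := congr($hassoc ((comul (R := k) (A := C)).lTensor C (comul c)))
    _ = _ := by simp only [sliceRight, LinearMap.lTensor_comp, LinearMap.comp_apply]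

theorem comul_sliceLeft (f : C →ₗ[k] k) (c : C) :
    comul (R := k) (sliceLeft f c) = (sliceLeft f).rTensor C (comul c) := by
  have hnat : comul ∘ₗ (TensorProduct.lid k C).toLinearMap ∘ₗ f.rTensor C =
      (TensorProduct.lid k (C ⊗[k] C)).toLinearMap ∘ₗ f.rTensor (C ⊗[k] C) ∘ₗ
        (comul (R := k) (A := C)).lTensor C := by
    ext; simp
  have hassoc : (TensorProduct.lid k (C ⊗[k] C)).toLinearMap ∘ₗ f.rTensor (C ⊗[k] C) ∘ₗ
      (TensorProduct.assoc k C C C).toLinearMap =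
      ((TensorProduct.lid k C).toLinearMap ∘ₗ f.rTensor C).rTensor C := by
    ext; simp [TensorProduct.smul_tmul']
  calc comul (sliceLeft f c)
      = TensorProduct.lid k (C ⊗[k] C) (f.rTensor (C ⊗[k] C) (TensorProduct.assoc k C C C
          ((comul (R := k) (A := C)).rTensor C (comul c)))) := by
        rw [coassoc_apply]; exact congr($hnat (comul c))
    _ = _ := congr($hassoc ((comul (R := k) (A := C)).rTensor C (comul c)))
    _ = _ := by simp only [sliceLeft, LinearMap.rTensor_comp, LinearMap.comp_apply]

theorem sliceRight_sliceRight (g h : C →ₗ[k] k) (c : C) :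
    sliceRight h (sliceRight g c) = sliceRight (h ∘ₗ sliceRight g) c := by
  conv_lhs => rw [sliceRight, LinearMap.comp_apply, LinearMap.comp_apply, comul_sliceRight]
  rw [← LinearMap.comp_apply (h.lTensor C), ← LinearMap.lTensor_comp]; rfl

theorem sliceLeft_sliceLeft (f h : C →ₗ[k] k) (c : C) :
    sliceLeft h (sliceLeft f c) = sliceLeft (h ∘ₗ sliceLeft f) c := by
  conv_lhs => rw [sliceLeft, LinearMap.comp_apply, LinearMap.comp_apply, comul_sliceLeft]
  rw [← LinearMap.comp_apply (h.rTensor C), ← LinearMap.rTensor_comp]; rfl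

theorem sliceLeft_sliceRight (f g : C →ₗ[k] k) (c : C) :
    sliceLeft f (sliceRight g c) = sliceRight g (sliceLeft f c) := by
  have hnat : (TensorProduct.lid k C).toLinearMap ∘ₗ f.rTensor C ∘ₗ (sliceRight g).lTensor C =
      sliceRight g ∘ₗ (TensorProduct.lid k C).toLinearMap ∘ₗ f.rTensor C := by
    ext; simp
  conv_lhs => rw [sliceLeft, LinearMap.comp_apply, LinearMap.comp_apply, comul_sliceRight]
  exact congr($hnat (comul c))

theorem sliceRight_counit (c : C) : sliceRight (counit (R := k)) c = c := by
  simp [sliceRight]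

theorem sliceLeft_counit (c : C) : sliceLeft (counit (R := k)) c = c := by
  simp [sliceLeft]

variable (k) in
noncomputable def sliceSpan (a : C) : Submodule k C :=
  Submodule.span k
    (Set.range fun fg : (C →ₗ[k] k) × (C →ₗ[k] k) => sliceRight fg.2 (sliceLeft fg.1 a))

theorem sliceRight_sliceLeft_mem_sliceSpan (f g : C →ₗ[k] k) (a : C) :
    sliceRight g (sliceLeft f a) ∈ sliceSpan k a :=
  Submodule.subset_span ⟨(f, g), rfl⟩

theorem mem_sliceSpan_self (a : C) : a ∈ sliceSpan k a := by
  simpa [sliceLeft_counit, sliceRight_counit] using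
    sliceRight_sliceLeft_mem_sliceSpan (counit (R := k)) counit a

end Slices

section SliceSpan
open Coalgebra
variable {k C : Type*} [Field k] [AddCommGroup C] [Module k C] [Coalgebra k C]

theorem sliceSpan_fg (a : C) : (sliceSpan k a).FG := by
  classical
  obtain ⟨_, ⟨F, rfl⟩, hF⟩ := exists_fg_forall_lid_rTensor_mem (comul (R := k) a)
  choose W hWfg hW using fun x : C => exists_fg_forall_rid_lTensor_mem (comul (R := k) x)
  refine (Submodule.fg_finset_sup F W fun x _ => hWfg x).of_le (Submodule.span_le.mpr ?_)
  rintro _ ⟨⟨f, g⟩, rfl⟩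
  have : Submodule.span k F ≤ (F.sup W).comap (sliceRight g) :=
    Submodule.span_le.mpr fun x hx => Finset.le_sup (f := W) hx (hW x g)
  exact this (hF f)

theorem comul_mem_range_map_subtype_sliceSpan (a : C) {v : C} (hv : v ∈ sliceSpan k a) :
    comul (R := k) v ∈
      LinearMap.range (TensorProduct.map (sliceSpan k a).subtype (sliceSpan k a).subtype) := by
  refine Submodule.span_le (p := (LinearMap.range _).comap comul).mpr ?_ hv
  rintro _ ⟨⟨f, g⟩, rfl⟩
  refine mem_range_map_subtype_of_mem_range_rTensor_of_mem_range_lTensor _ _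
    (mem_range_rTensor_subtype_of_forall _ fun h => ?_)
    (mem_range_lTensor_subtype_of_forall _ fun h => ?_)
  · change sliceRight h (sliceRight g (sliceLeft f a)) ∈ _
    rw [sliceRight_sliceRight]
    exact sliceRight_sliceLeft_mem_sliceSpan _ _ _
  · change sliceLeft h (sliceRight g (sliceLeft f a)) ∈ _
    rw [sliceLeft_sliceRight, sliceLeft_sliceLeft]
    exact sliceRight_sliceLeft_mem_sliceSpan _ _ _

end SliceSpan

section SubmoduleTensorSquare
variable {R M : Type*} [CommSemiring R] [AddCommMonoid M] [Module R M]

theorem range_map_subtype_mono {V W : Submodule R M} (h : V ≤ W) :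
    LinearMap.range (map V.subtype V.subtype) ≤ LinearMap.range (map W.subtype W.subtype) := by
  rw [← Submodule.subtype_comp_inclusion V W h, map_comp]
  exact LinearMap.range_comp_le_range _ _

theorem map_mem_range_map_subtype {V : Submodule R M} {φ : M →ₗ[R] M} (hφ : ∀ v ∈ V, φ v ∈ V)
    {t : M ⊗[R] M} (ht : t ∈ LinearMap.range (map V.subtype V.subtype)) :
    map φ φ t ∈ LinearMap.range (map V.subtype V.subtype) := by
  obtain ⟨u, rfl⟩ := ht
  refine ⟨map (φ.restrict hφ) (φ.restrict hφ) u, ?_⟩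
  rw [← LinearMap.comp_apply, ← LinearMap.comp_apply, ← map_comp, ← map_comp]
  rfl

theorem comm_mem_range_map_subtype {V : Submodule R M} {t : M ⊗[R] M}
    (ht : t ∈ LinearMap.range (map V.subtype V.subtype)) :
    TensorProduct.comm R M M t ∈ LinearMap.range (map V.subtype V.subtype) := by
  obtain ⟨u, rfl⟩ := ht
  refine ⟨TensorProduct.comm R V V u, ?_⟩
  induction u using TensorProduct.induction_on <;> simp_all

end SubmoduleTensorSquare

section Antipode
open Coalgebra HopfAlgebra WithConv
variable {k A : Type*} [CommSemiring k] [CommSemiring A] [HopfAlgebra k A]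

-- `S` is the convolution inverse of `id`, and inverting an algebra map precomposes it with `S`.
theorem antipode_antipode (a : A) : antipode k (antipode k a) = a :=
  congr($(inv_inv (toConv (AlgHom.id k A))).ofConv a)

theorem comul_antipode (a : A) :
    comul (R := k) (antipode k a) =
      TensorProduct.comm k A A (map (antipode k) (antipode k) (comul a)) := by
  -- Among the `A ⊗ A`-valued points, `Δ = ι₁ * ι₂`; now invert both sides.
  let ι₁ : A →ₐ[k] A ⊗[k] A := Algebra.TensorProduct.includeLeft
  let ι₂ : A →ₐ[k] A ⊗[k] A := Algebra.TensorProduct.includeRight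
  have hδ : toConv (Bialgebra.comulAlgHom k A) = toConv ι₁ * toConv ι₂ := by
    have : (Algebra.TensorProduct.lmul' k).comp (Algebra.TensorProduct.map ι₁ ι₂) =
        AlgHom.id k (A ⊗[k] A) := by
      ext <;> simp [ι₁, ι₂]
    rw [AlgHom.convMul_def, ofConv_toConv, ofConv_toConv, ← AlgHom.comp_assoc, this]; rfl
  have key : (toConv (Bialgebra.comulAlgHom k A))⁻¹ = (toConv ι₂)⁻¹ * (toConv ι₁)⁻¹ := by
    rw [hδ]; exact mul_inv_rev (toConv ι₁) (toConv ι₂)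
  refine congr($(key).ofConv a).trans ?_
  rw [AlgHom.convMul_apply]
  induction comul (R := k) a with
  | zero => simp
  | tmul x y =>
    change (1 ⊗ₜ[k] antipode k x) * (antipode k y ⊗ₜ[k] (1 : A)) = _
    simp
  | add x y hx hy => simp_all

end Antipode

section HopfSubalgebra
open Coalgebra HopfAlgebra
variable {k A : Type} [Field k] [CommRing A] [HopfAlgebra k A]

theorem isHopfSubalgebra_adjoin {X : Set A}
    (hcomul : ∀ x ∈ X, comul (R := k) x ∈ LinearMap.range
      (map (Algebra.adjoin k X).val.toLinearMap (Algebra.adjoin k X).val.toLinearMap))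
    (hanti : ∀ x ∈ X, antipode k x ∈ Algebra.adjoin k X) :
    IsHopfSubalgebra (Algebra.adjoin k X) :=
  ⟨fun _ hb => Algebra.adjoin_le (S := (Algebra.TensorProduct.map (Algebra.adjoin k X).val
      (Algebra.adjoin k X).val).range.comap (Bialgebra.comulAlgHom k A)) hcomul hb,
    fun _ hb => Algebra.adjoin_le (S := (Algebra.adjoin k X).comap (antipodeAlgHom k A)) hanti hb⟩

theorem isHopfSubalgebra_bot : IsHopfSubalgebra (⊥ : Subalgebra k A) := by
  rw [← Algebra.adjoin_empty]
  exact isHopfSubalgebra_adjoin (by simp) (by simp)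

theorem IsHopfSubalgebra.sup {B₁ B₂ : Subalgebra k A} (h₁ : IsHopfSubalgebra B₁)
    (h₂ : IsHopfSubalgebra B₂) : IsHopfSubalgebra (B₁ ⊔ B₂) := by
  have hle₁ : Subalgebra.toSubmodule B₁ ≤ Subalgebra.toSubmodule (B₁ ⊔ B₂) := le_sup_left (a := B₁)
  have hle₂ : Subalgebra.toSubmodule B₂ ≤ Subalgebra.toSubmodule (B₁ ⊔ B₂) := le_sup_right (b := B₂)
  refine isHopfSubalgebra_adjoin ?_ ?_
  · rintro x (hx | hx)
    exacts [range_map_subtype_mono hle₁ (h₁.1 x hx), range_map_subtype_mono hle₂ (h₂.1 x hx)]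
  · rintro x (hx | hx)
    exacts [hle₁ (h₁.2 x hx), hle₂ (h₂.2 x hx)]

theorem isHopfSubalgebra_adjoin_sup_map_antipode {V : Submodule k A}
    (hV : ∀ v ∈ V, comul (R := k) v ∈ LinearMap.range (map V.subtype V.subtype)) :
    IsHopfSubalgebra (Algebra.adjoin k ((V ⊔ V.map (antipode k) : Submodule k A) : Set A)) := by
  set V' := V ⊔ V.map (antipode k)
  set B := Algebra.adjoin k (V' : Set A)
  have hV'B : V' ≤ Subalgebra.toSubmodule B := Algebra.subset_adjoin
  have hanti : V'.map (antipode k) ≤ V' := by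
    rw [Submodule.map_sup, ← Submodule.map_comp,
      show antipode k ∘ₗ antipode k = LinearMap.id from LinearMap.ext antipode_antipode,
      Submodule.map_id, sup_comm]
  have hantiB : ∀ b ∈ B, antipode k b ∈ B :=
    Algebra.adjoin_le (S := B.comap (antipodeAlgHom k A))
      fun x hx => hV'B (hanti ⟨x, hx, rfl⟩)
  have hcomul : V' ≤ (LinearMap.range (map (Subalgebra.toSubmodule B).subtype
      (Subalgebra.toSubmodule B).subtype)).comap comul := by
    have hVB := range_map_subtype_mono (le_sup_left.trans hV'B)
    refine sup_le (fun v hv => hVB (hV v hv)) ?_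
    rintro _ ⟨v, hv, rfl⟩
    rw [Submodule.mem_comap, comul_antipode]
    exact comm_mem_range_map_subtype (map_mem_range_map_subtype hantiB (hVB (hV v hv)))
  exact isHopfSubalgebra_adjoin (fun x hx => hcomul hx) fun x hx => hV'B (hanti ⟨x, hx, rfl⟩)

theorem exists_fg_isHopfSubalgebra_mem (a : A) :
    ∃ B : Subalgebra k A, B.FG ∧ IsHopfSubalgebra B ∧ a ∈ B := by
  obtain ⟨t, ht⟩ := (sliceSpan_fg (k := k) a).sup ((sliceSpan_fg a).map (antipode k))
  refine ⟨_, ⟨t, ?_⟩, isHopfSubalgebra_adjoin_sup_map_antipode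
    fun v hv => comul_mem_range_map_subtype_sliceSpan a hv,
    Algebra.subset_adjoin (Submodule.mem_sup_left (mem_sliceSpan_self a))⟩
  rw [← ht, Algebra.adjoin_span]

end HopfSubalgebra

universe u

section Rank
open Cardinal
variable {k : Type*} {A : Type u} [Field k] [Ring A] [Algebra k A]

theorem Set.infinite_of_adjoin_eq_top (hnfg : ¬ (⊤ : Subalgebra k A).FG) {S : Set A}
    (hS : Algebra.adjoin k S = ⊤) : S.Infinite :=
  fun hfin => hnfg ⟨hfin.toFinset, by simpa using hS⟩

theorem rank_le_mk_of_adjoin_eq_top (hnfg : ¬ (⊤ : Subalgebra k A).FG) {S : Set A}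
    (hS : Algebra.adjoin k S = ⊤) : Module.rank k A ≤ #S := by
  have hinf := (Set.infinite_of_adjoin_eq_top hnfg hS).to_subtype
  calc Module.rank k A = Module.rank k (Algebra.adjoin k S) := by rw [hS, Subalgebra.rank_top]
    _ ≤ max #S ℵ₀ := Algebra.rank_adjoin_le S
    _ = #S := max_eq_left (aleph0_le_mk S)

theorem adjoin_ofVectorSpaceIndex : Algebra.adjoin k (Module.Basis.ofVectorSpaceIndex k A) = ⊤ := by
  rw [eq_top_iff]
  intro x _
  apply Algebra.span_le_adjoin
  rw [← Module.Basis.range_ofVectorSpace, (Module.Basis.ofVectorSpace k A).span_eq]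
  trivial

theorem isLeast_rank_adjoin_eq_top (hnfg : ¬ (⊤ : Subalgebra k A).FG) :
    IsLeast {c : Cardinal | ∃ S : Set A, Cardinal.mk S = c ∧ Algebra.adjoin k S = ⊤}
      (Module.rank k A) :=
  ⟨⟨_, (Module.Basis.ofVectorSpace k A).mk_eq_rank'', adjoin_ofVectorSpaceIndex⟩,
    by rintro _ ⟨S, rfl, hS⟩; exact rank_le_mk_of_adjoin_eq_top hnfg hS⟩

theorem rank_le_mk_of_fg_cover (hnfg : ¬ (⊤ : Subalgebra k A).FG) {ι : Type u}
    {B : ι → Subalgebra k A} (hfg : ∀ i, (B i).FG) (hcover : ∀ a : A, ∃ i, a ∈ B i) :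
    Module.rank k A ≤ #ι := by
  choose t ht using hfg
  have hS : Algebra.adjoin k (⋃ i, (t i : Set A)) = ⊤ := by
    refine eq_top_iff.mpr fun a _ => ?_
    obtain ⟨i, hi⟩ := hcover a
    rw [← ht i] at hi
    exact Algebra.adjoin_mono (Set.subset_iUnion (fun i => (t i : Set A)) i) hi
  have : Infinite ι := by
    by_contra hfin
    rw [not_infinite_iff_finite] at hfin
    exact Set.infinite_of_adjoin_eq_top hnfg hS
      (Set.finite_iUnion fun i => (t i).finite_toSet)
  calc Module.rank k A ≤ #(⋃ i, (t i : Set A)) := rank_le_mk_of_adjoin_eq_top hnfg hS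
    _ ≤ #ι * ⨆ i, #(t i : Set A) := mk_iUnion_le _
    _ ≤ #ι * ℵ₀ := by gcongr; exact ciSup_le' fun i => (lt_aleph0_of_finite _).le
    _ = #ι := mul_aleph0_eq (aleph0_le_mk ι)

end Rank

section HopfCover
open Cardinal
variable {k A : Type} [Field k] [CommRing A] [HopfAlgebra k A]

theorem exists_directed_fg_isHopfSubalgebra_cover {ι : Type} (b : Module.Basis ι k A) :
    ∃ B : Finset ι → Subalgebra k A, (∀ s, (B s).FG) ∧ (∀ s, IsHopfSubalgebra (B s)) ∧
      Directed (· ≤ ·) B ∧ ∀ a : A, ∃ s, a ∈ B s := by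
  classical
  choose H hHfg hHhopf hHmem using fun i => exists_fg_isHopfSubalgebra_mem (k := k) (b i)
  refine ⟨fun s => s.sup H, fun s => Finset.sup_induction Subalgebra.fg_bot
      (fun _ h₁ _ h₂ => h₁.sup h₂) fun i _ => hHfg i,
    fun s => Finset.sup_induction isHopfSubalgebra_bot (fun _ h₁ _ h₂ => h₁.sup h₂)
      fun i _ => hHhopf i,
    fun s t => ⟨s ∪ t, Finset.sup_mono Finset.subset_union_left,
      Finset.sup_mono Finset.subset_union_right⟩,
    fun a => ⟨(b.repr a).support, ?_⟩⟩
  refine (Submodule.span_le (p := Subalgebra.toSubmodule ((b.repr a).support.sup H))).mpr ?_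
    (b.mem_span_repr_support a)
  rintro _ ⟨i, hi, rfl⟩
  exact Finset.le_sup (f := H) hi (hHmem i)

theorem isLeast_rank_directed_fg_isHopfSubalgebra_cover (hnfg : ¬ (⊤ : Subalgebra k A).FG) :
    IsLeast {c : Cardinal | ∃ (ι : Type) (B : ι → Subalgebra k A),
        Cardinal.mk ι = c ∧ (∀ i, (B i).FG) ∧ (∀ i, IsHopfSubalgebra (B i)) ∧
        Directed (· ≤ ·) B ∧ ∀ a : A, ∃ i, a ∈ B i} (Module.rank k A) := by
  refine ⟨?_, by
    rintro _ ⟨ι, B, rfl, hfg, -, -, hcover⟩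
    exact rank_le_mk_of_fg_cover hnfg hfg hcover⟩
  have : Infinite (Module.Basis.ofVectorSpaceIndex k A) :=
    (Set.infinite_of_adjoin_eq_top hnfg adjoin_ofVectorSpaceIndex).to_subtype
  obtain ⟨B, hB⟩ := exists_directed_fg_isHopfSubalgebra_cover (Module.Basis.ofVectorSpace k A)
  exact ⟨_, B, by rw [mk_finset_of_infinite, (Module.Basis.ofVectorSpace k A).mk_eq_rank''], hB⟩

end HopfCover

theorem stmt0 (k A : Type) [Field k] [CommRing A] [HopfAlgebra k A]
    (hnfg : ¬ (⊤ : Subalgebra k A).FG) :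
    Module.rank k A =
      sInf {c : Cardinal | ∃ S : Set A, Cardinal.mk S = c ∧ Algebra.adjoin k S = ⊤} ∧
    Module.rank k A =
      sInf {c : Cardinal | ∃ (ι : Type) (B : ι → Subalgebra k A),
        Cardinal.mk ι = c ∧ (∀ i, (B i).FG) ∧ (∀ i, IsHopfSubalgebra (B i)) ∧
        Directed (· ≤ ·) B ∧ ∀ a : A, ∃ i, a ∈ B i} :=
  ⟨(isLeast_rank_adjoin_eq_top hnfg).csInf_eq.symm,
    (isLeast_rank_directed_fg_isHopfSubalgebra_cover hnfg).csInf_eq.symm⟩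
end

section
/- Let κ be an infinite cardinal and let M be an abelian group of cardinality κ with the following property: for every finitely generated subgroup M₁ of M, every abelian group M₂ of cardinality at most κ, and every injective group homomorphism j : M₁ → M₂, there exists an injective group homomorphism e : M₂ → M such that e ∘ j coincides with the inclusion of M₁ into M. Then M is divisible. -/
theorem stmt17 (κ : Cardinal) (hκ : Cardinal.aleph0 ≤ κ)
    (M : Type) [AddCommGroup M] (hM : Cardinal.mk M = κ)
    (hprop : ∀ M₁ : AddSubgroup M, M₁.FG →
      ∀ (M₂ : Type) [AddCommGroup M₂], Cardinal.mk M₂ ≤ κ →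
      ∀ j : M₁ →+ M₂, Function.Injective j →
      ∃ e : M₂ →+ M, Function.Injective e ∧ ∀ x : M₁, e (j x) = (x : M)) :
    ∀ (a : M) (n : ℕ), 0 < n → ∃ b : M, n • b = a := by
  intro a n hn
  -- the hom ℤ → M, k ↦ k • a
  set ψ : ℤ →+ M := zmultiplesHom M a with hψ
  set K : AddSubgroup ℤ := ψ.ker with hK
  set K' : AddSubgroup ℚ := K.map (Int.castAddHom ℚ) with hK'
  set D := ℚ ⧸ K' with hD
  -- the induced injective map ℤ ⧸ K →+ D
  have hle : K ≤ K'.comap (Int.castAddHom ℚ) := fun k hk => AddSubgroup.mem_comap.2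
    (AddSubgroup.mem_map.2 ⟨k, hk, rfl⟩)
  set f : ℤ ⧸ K →+ D := QuotientAddGroup.map K K' (Int.castAddHom ℚ) hle with hf
  have hfinj : Function.Injective f := by
    rw [injective_iff_map_eq_zero]
    intro x hx
    induction x using QuotientAddGroup.induction_on with
    | H k =>
      rw [hf, QuotientAddGroup.map_mk] at hx
      rw [QuotientAddGroup.eq_zero_iff] at hx ⊢
      obtain ⟨k', hk', hkk⟩ := AddSubgroup.mem_map.1 hx
      have h2 : (k' : ℚ) = (k : ℚ) := hkk
      have : k' = k := by exact_mod_cast h2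
      rwa [← this]
  -- M₁
  set M₁ : AddSubgroup M := AddSubgroup.zmultiples a with hM₁
  have hFG : M₁.FG := ⟨{a}, by simp [hM₁, AddSubgroup.zmultiples_eq_closure]⟩
  -- equiv from M₁ to ℤ ⧸ K
  have hrange : ψ.range = M₁ := AddSubgroup.range_zmultiplesHom a
  set eqv : ℤ ⧸ K ≃+ M₁ :=
    (QuotientAddGroup.quotientKerEquivRange ψ).trans (AddEquiv.addSubgroupCongr hrange)
    with heqv
  set j : M₁ →+ D := f.comp (eqv.symm : M₁ ≃+ ℤ ⧸ K).toAddMonoidHom with hj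
  have hjinj : Function.Injective j := hfinj.comp eqv.symm.injective
  have hcard : Cardinal.mk D ≤ κ := by
    refine le_trans (Cardinal.mk_le_of_surjective (f := QuotientAddGroup.mk (s := K'))
      QuotientAddGroup.mk_surjective) ?_
    rw [Cardinal.mk_denumerable ℚ]; exact hκ
  obtain ⟨e, he, hcomm⟩ := hprop M₁ hFG D hcard j hjinj
  -- a as element of M₁
  have haM₁ : a ∈ M₁ := AddSubgroup.mem_zmultiples a
  set aa : M₁ := ⟨a, haM₁⟩ with haa
  -- j aa = f (1 mod K)
  have heqv1 : eqv ((1 : ℤ) : ℤ ⧸ K) = aa := by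
    apply Subtype.ext
    simp only [heqv, haa, AddEquiv.trans_apply, AddEquiv.addSubgroupCongr_apply,
      QuotientAddGroup.quotientKerEquivRange]
    show ((QuotientAddGroup.rangeKerLift ψ) ((1:ℤ) : ℤ ⧸ K) : M) = a
    show (ψ (1:ℤ) : M) = a
    simp [hψ]
  have hjaa : j aa = f ((1 : ℤ) : ℤ ⧸ K) := by
    rw [hj]
    simp only [AddMonoidHom.comp_apply, AddEquiv.coe_toAddMonoidHom]
    rw [← heqv1, AddEquiv.symm_apply_apply]
  -- divide in D
  haveI : DivisibleBy ℚ ℕ := AddGroup.divisibleByNatOfDivisibleByInt ℚ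
  haveI : DivisibleBy D ℕ := inferInstanceAs (DivisibleBy (ℚ ⧸ K') ℕ)
  obtain ⟨c, hc⟩ : ∃ c : D, n • c = j aa := ⟨DivisibleBy.div (j aa) n,
    DivisibleBy.div_cancel _ hn.ne'⟩
  refine ⟨e c, ?_⟩
  have : e (n • c) = a := by rw [hc, hcomm aa]
  rwa [map_nsmul] at this
end

section
/- Let κ be an infinite cardinal, let ι be an index set of cardinality κ, and let M be an abelian group of cardinality κ with the following property: for every finitely generated subgroup M₁ of M, every abelian group M₂ of cardinality at most κ, and every injective group homomorphism j : M₁ → M₂, there exists an injective group homomorphism e : M₂ → M such that e ∘ j coincides with the inclusion of M₁ into M. Then M is isomorphic, as an abelian group, to the direct sum (⨁_{i ∈ ι} ℚ) ⊕ (⨁_{i ∈ ι} ℚ/ℤ). -/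
/-!
Call an abelian group of cardinality `κ` *rich* if it is divisible and every subgroup generated by
fewer than `κ` elements is disjoint from some cyclic subgroup of each order. Both `M` and
`N = ι →₀ ℚ × ℚ/ℤ` are rich. In `N` one uses a coordinate outside the supports of the generators.
In `M` one tests the extension property on `C × ZMod d` when `C` is finitely generated, and on a
copy of `κ.out →₀ ℚ × ℚ/ℤ` when `#C < κ`; divisibility comes from adjoining an `n`-th root of `x`
to `⟨x⟩`.

Between rich groups, an isomorphism between subgroups generated by fewer than `κ` elements extends
to any further element `x`: if `d` is the order of `x` modulo the domain, send `x` to `y₁ + y₀`,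
where `d • y₁` is the image of `d • x` and `y₀` has order `d` and generates a subgroup disjoint
from the range and `y₁`. A back-and-forth along `κ.ord`, enumerating `M ⊕ N`, gives the
isomorphism; graphs of partial isomorphisms are subgroups of `M × N`, so limit stages are unions.
-/

open Cardinal Set Function AddSubgroup

universe u

namespace AddSubgroup

variable {X Y : Type*} [AddCommGroup X] [AddCommGroup Y]

def IsPartialIsoGraph (G : AddSubgroup (X × Y)) : Prop := ∀ p ∈ G, p.1 = 0 ↔ p.2 = 0

namespace IsPartialIsoGraph

theorem iSup {ι : Sort*} {K : ι → AddSubgroup (X × Y)} (hK : Directed (· ≤ ·) K)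
    (h : ∀ i, (K i).IsPartialIsoGraph) : (⨆ i, K i).IsPartialIsoGraph := by
  rcases isEmpty_or_nonempty ι with hι | hι
  · intro p hp
    rw [iSup_of_empty, mem_bot] at hp
    simp [hp]
  · intro p hp
    obtain ⟨i, hi⟩ := (mem_iSup_of_directed hK).mp hp
    exact h i p hi

theorem closure_image_swap {s : Set (X × Y)} (hG : (closure s).IsPartialIsoGraph) :
    (closure (Prod.swap '' s)).IsPartialIsoGraph := by
  have hle : closure (Prod.swap '' s) ≤
      (closure s).comap (AddEquiv.prodComm : Y × X ≃+ X × Y).toAddMonoidHom :=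
    (closure_le _).mpr (by rintro _ ⟨q, hq, rfl⟩; exact subset_closure hq)
  exact fun p hp => (hG _ (hle hp)).symm

theorem zmultiples_sup {G : AddSubgroup (X × Y)} (hG : G.IsPartialIsoGraph) {x : X} {y : Y}
    {d : ℕ} (hd : d • (x, y) ∈ G) (hx : ∀ k : ℤ, k • x ∈ G.map (AddMonoidHom.fst X Y) → (d : ℤ) ∣ k)
    (hy : ∀ k : ℤ, k • y ∈ G.map (AddMonoidHom.snd X Y) → (d : ℤ) ∣ k) :
    (zmultiples (x, y) ⊔ G).IsPartialIsoGraph := by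
  intro q hq
  obtain ⟨_, ⟨k, rfl⟩, g, hg, rfl⟩ := mem_sup.mp hq
  have hmem : (d : ℤ) ∣ k → k • (x, y) + g ∈ G := by
    rintro ⟨l, rfl⟩
    rw [mul_comm, mul_zsmul, natCast_zsmul]
    exact add_mem (zsmul_mem hd l) hg
  constructor
  · intro h
    exact (hG _ (hmem (hx k ⟨-g, neg_mem hg, (eq_neg_of_add_eq_zero_left h).symm⟩))).mp h
  · intro h
    exact (hG _ (hmem (hy k ⟨-g, neg_mem hg, (eq_neg_of_add_eq_zero_left h).symm⟩))).mpr h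

theorem nonempty_addEquiv {G : AddSubgroup (X × Y)} (hG : G.IsPartialIsoGraph)
    (hfst : ∀ x, ∃ y, (x, y) ∈ G) (hsnd : ∀ y, ∃ x, (x, y) ∈ G) : Nonempty (X ≃+ Y) := by
  have hfst_bij : Bijective ((AddMonoidHom.fst X Y).comp G.subtype) := by
    refine ⟨(injective_iff_map_eq_zero _).mpr fun p hp => ?_, fun x => ?_⟩
    · exact Subtype.ext (Prod.ext hp ((hG p p.2).mp hp))
    · obtain ⟨y, hy⟩ := hfst x
      exact ⟨⟨(x, y), hy⟩, rfl⟩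
  have hsnd_bij : Bijective ((AddMonoidHom.snd X Y).comp G.subtype) := by
    refine ⟨(injective_iff_map_eq_zero _).mpr fun p hp => ?_, fun y => ?_⟩
    · exact Subtype.ext (Prod.ext ((hG p p.2).mpr hp) hp)
    · obtain ⟨x, hx⟩ := hsnd y
      exact ⟨⟨(x, y), hx⟩, rfl⟩
  exact ⟨(AddEquiv.ofBijective _ hfst_bij).symm.trans (AddEquiv.ofBijective _ hsnd_bij)⟩

end IsPartialIsoGraph

end AddSubgroup

theorem Set.iUnion_Iic_coe_Iio {α : Type*} [Preorder α] (t : α) :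
    ⋃ u : Iio t, Iic (u : α) = Iio t := by
  ext u
  simpa using ⟨fun ⟨v, hv, huv⟩ => huv.trans_lt hv, fun h => ⟨u, h, le_rfl⟩⟩

theorem nonempty_addEquiv_of_back_and_forth {X Y : Type u} [AddCommGroup X] [AddCommGroup Y]
    {κ : Cardinal.{u}} (hκ : ℵ₀ ≤ κ) (hX : #X = κ) (hY : #Y = κ)
    (step : ∀ s : Set (X × Y), #s < κ → (closure s).IsPartialIsoGraph → ∀ z : X ⊕ Y,
      ∃ p : X × Y, (closure (insert p s)).IsPartialIsoGraph ∧ Sum.elim (· = p.1) (· = p.2) z) :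
    Nonempty (X ≃+ Y) := by
  obtain ⟨e⟩ : Nonempty (κ.ord.ToType ≃ X ⊕ Y) :=
    Cardinal.eq.mp (by rw [mk_ord_toType, mk_sum, lift_id, lift_id, hX, hY, add_eq_self hκ])
  choose! next hnext_iso hnext_elim using step
  -- stage `t` adds the pair `p t`, which takes care of the `t`-th element of `X ⊕ Y`
  let p : κ.ord.ToType → X × Y :=
    wellFounded_lt.fix fun t ih => next (range fun u : Iio t => ih u u.2) (e t)
  have hp : ∀ t, p t = next (p '' Iio t) (e t) := fun t => by
    rw [image_eq_range]; exact wellFounded_lt.fix_eq _ t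
  have hcard : ∀ t, #(p '' Iio t) < κ := fun t =>
    mk_image_le.trans_lt (by simpa using mk_Iio_lt t)
  let H : κ.ord.ToType → AddSubgroup (X × Y) := fun t => closure (p '' Iic t)
  have hH_mono : Monotone H := fun a b hab => closure_mono (image_mono (Iic_subset_Iic.mpr hab))
  have hIio : ∀ t, closure (p '' Iio t) = ⨆ u : Iio t, H u := fun t => by
    rw [← AddSubgroup.closure_iUnion, ← image_iUnion, iUnion_Iic_coe_Iio]
  have hIio_iso : ∀ t, (∀ u < t, (H u).IsPartialIsoGraph) →
      (closure (p '' Iio t)).IsPartialIsoGraph := fun t h => by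
    rw [hIio]
    exact IsPartialIsoGraph.iSup (hH_mono.comp (Subtype.mono_coe _)).directed_le
      fun u => h u u.2
  have hH_iso : ∀ t, (H t).IsPartialIsoGraph := fun t =>
    WellFoundedLT.induction t fun t ih => by
      show (closure (p '' Iic t)).IsPartialIsoGraph
      rw [← Iio_insert, image_insert_eq, hp t]
      exact hnext_iso _ (hcard t) (hIio_iso t ih) (e t)
  have hcovers : ∀ t, Sum.elim (· = (p t).1) (· = (p t).2) (e t) := fun t => by
    rw [hp t]
    exact hnext_elim _ (hcard t) (hIio_iso t fun u _ => hH_iso u) (e t)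
  have hmem : ∀ t, p t ∈ ⨆ t, H t := fun t =>
    mem_iSup_of_mem t (subset_closure (mem_image_of_mem p (mem_Iic.mpr le_rfl)))
  refine (IsPartialIsoGraph.iSup hH_mono.directed_le hH_iso).nonempty_addEquiv
    (fun x => ?_) (fun y => ?_)
  · obtain ⟨t, ht⟩ := e.surjective (Sum.inl x)
    have hx : x = (p t).1 := by simpa [ht] using hcovers t
    exact ⟨(p t).2, hx ▸ hmem t⟩
  · obtain ⟨t, ht⟩ := e.surjective (Sum.inr y)
    have hy : y = (p t).2 := by simpa [ht] using hcovers t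
    exact ⟨(p t).1, hy ▸ hmem t⟩

namespace AddCommGroup

def IsDivisible (Y : Type*) [AddCommGroup Y] : Prop :=
  ∀ n : ℤ, n ≠ 0 → Surjective fun y : Y => n • y

-- `d = 0` asks for an infinite cyclic subgroup
def HasIndependentCyclics (κ : Cardinal.{u}) (Y : Type u) [AddCommGroup Y] : Prop :=
  ∀ s : Set Y, #s < κ → ∀ d : ℕ, ∃ y : Y, addOrderOf y = d ∧ Disjoint (zmultiples y) (closure s)

end AddCommGroup

open AddCommGroup

theorem AddSubgroup.IsPartialIsoGraph.exists_closure_insert {X : Type*} {Y : Type u}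
    [AddCommGroup X] [AddCommGroup Y] {κ : Cardinal.{u}} (hκ : ℵ₀ ≤ κ)
    (hYd : IsDivisible Y) (hYc : HasIndependentCyclics κ Y) {s : Set (X × Y)}
    (hs : #(Prod.snd '' s) < κ) (hG : (closure s).IsPartialIsoGraph) (x : X) :
    ∃ y, (closure (insert (x, y) s)).IsPartialIsoGraph := by
  set G := closure s
  set d := addOrderOf (x : X ⧸ G.map (AddMonoidHom.fst X Y))
  obtain ⟨⟨x', b⟩, hb, hx'⟩ : d • x ∈ G.map (AddMonoidHom.fst X Y) := by
    rw [← QuotientAddGroup.eq_zero_iff, QuotientAddGroup.mk_nsmul, addOrderOf_nsmul_eq_zero]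
  obtain ⟨y₁, hy₁⟩ : ∃ y₁ : Y, d • y₁ = b := by
    rcases eq_or_ne d 0 with hd | hd
    · refine ⟨0, ?_⟩
      rw [nsmul_zero]
      exact ((hG _ hb).mp (by simpa [hd] using hx')).symm
    · obtain ⟨y₁, hy₁⟩ := hYd d (by exact_mod_cast hd) b
      exact ⟨y₁, by simpa using hy₁⟩
  obtain ⟨y₀, hy₀, hdisj⟩ := hYc (insert y₁ (Prod.snd '' s))
    (mk_insert_le.trans_lt (add_lt_of_lt hκ hs (one_lt_aleph0.trans_le hκ))) d
  refine ⟨y₁ + y₀, ?_⟩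
  rw [insert_eq, closure_union, ← zmultiples_eq_closure]
  refine hG.zmultiples_sup (d := d) ?_ (fun k hk => ?_) (fun k hk => ?_)
  · have hd : d • (x, y₁ + y₀) = (x', b) := by
      ext
      · exact hx'.symm
      · rw [Prod.smul_snd, smul_add, hy₁, ← hy₀, addOrderOf_nsmul_eq_zero, add_zero]
    exact hd ▸ hb
  · exact addOrderOf_dvd_iff_zsmul_eq_zero.mpr
      (by rwa [← QuotientAddGroup.mk_zsmul, QuotientAddGroup.eq_zero_iff])
  · have hran : G.map (AddMonoidHom.snd X Y) ≤ closure (insert y₁ (Prod.snd '' s)) := by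
      rw [AddMonoidHom.map_closure]
      exact closure_mono (subset_insert _ _)
    have hky₀ : k • y₀ ∈ closure (insert y₁ (Prod.snd '' s)) := by
      have := sub_mem (hran hk) (zsmul_mem (subset_closure (mem_insert y₁ _)) k)
      rwa [smul_add, add_sub_cancel_left] at this
    rw [← hy₀]
    exact addOrderOf_dvd_iff_zsmul_eq_zero.mpr
      (disjoint_def.mp hdisj (zsmul_mem_zmultiples y₀ k) hky₀)

theorem nonempty_addEquiv_of_hasIndependentCyclics {X Y : Type u} [AddCommGroup X]
    [AddCommGroup Y] {κ : Cardinal.{u}} (hκ : ℵ₀ ≤ κ) (hX : #X = κ) (hY : #Y = κ)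
    (hXd : IsDivisible X) (hYd : IsDivisible Y)
    (hXc : HasIndependentCyclics κ X) (hYc : HasIndependentCyclics κ Y) : Nonempty (X ≃+ Y) :=
  nonempty_addEquiv_of_back_and_forth hκ hX hY fun s hs hG z => by
    cases z with
    | inl x =>
      obtain ⟨y, hy⟩ := hG.exists_closure_insert hκ hYd hYc (mk_image_le.trans_lt hs) x
      exact ⟨(x, y), hy, rfl⟩
    | inr y =>
      obtain ⟨x, hx⟩ := hG.closure_image_swap.exists_closure_insert hκ hXd hXc
        (mk_image_le.trans_lt (mk_image_le.trans_lt hs)) y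
      refine ⟨(x, y), ?_, rfl⟩
      simpa [image_insert_eq, image_image] using hx.closure_image_swap

theorem Cardinal.mk_biUnion_lt_of_finite {α β : Type u} {κ : Cardinal.{u}} (hκ : ℵ₀ ≤ κ)
    {s : Set α} (hs : #s < κ) {t : α → Set β} (ht : ∀ a ∈ s, (t a).Finite) :
    #(⋃ a ∈ s, t a) < κ := by
  rcases hκ.eq_or_lt with rfl | hκ
  · exact ((lt_aleph0_iff_set_finite.mp hs).biUnion ht).lt_aleph0
  · refine (mk_biUnion_le t s).trans_lt (mul_lt_of_lt hκ.le hs ?_)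
    exact (ciSup_le' fun a : s => (ht a a.2).lt_aleph0.le).trans_lt hκ


theorem AddSubgroup.cardinalMk_closure_le_max {G : Type u} [AddGroup G] (s : Set G) :
    #(closure s) ≤ max #s ℵ₀ := by
  rcases s.eq_empty_or_nonempty with rfl | hs
  · simp
  · have := hs.to_subtype
    calc #(closure s) = #(FreeAddGroup.lift ((↑) : s → G)).range := by
          rw [FreeAddGroup.range_lift_eq_closure, Subtype.range_coe]
      _ ≤ #(FreeAddGroup s) := mk_le_of_surjective (AddMonoidHom.rangeRestrict_surjective _)
      _ = max #s ℵ₀ := mk_freeAddGroup _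

namespace AddCommGroup

theorem IsDivisible.finsupp {ι A : Type*} [AddCommGroup A] (hA : IsDivisible A) :
    IsDivisible (ι →₀ A) := by
  intro n hn f
  induction f using Finsupp.induction_linear with
  | zero => exact ⟨0, smul_zero n⟩
  | add f g hf hg =>
    obtain ⟨f', rfl⟩ := hf
    obtain ⟨g', rfl⟩ := hg
    exact ⟨f' + g', smul_add n f' g'⟩
  | single i a =>
    obtain ⟨a', rfl⟩ := hA n hn a
    exact ⟨Finsupp.single i a', Finsupp.smul_single n i a'⟩

theorem HasIndependentCyclics.finsupp {ι A : Type u} [AddCommGroup A] {κ : Cardinal.{u}}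
    (hκ : ℵ₀ ≤ κ) (hι : #ι = κ) (hA : ∀ d : ℕ, ∃ a : A, addOrderOf a = d) :
    HasIndependentCyclics κ (ι →₀ A) := by
  intro s hs d
  have hsupp : #(⋃ f ∈ s, (f.support : Set ι)) < #ι :=
    hι ▸ Cardinal.mk_biUnion_lt_of_finite hκ hs fun f _ => f.support.finite_toSet
  obtain ⟨i, hi⟩ := (ne_univ_iff_exists_notMem (⋃ f ∈ s, (f.support : Set ι))).mp fun h => by
    rw [h, mk_univ] at hsupp
    exact hsupp.false
  have hker : closure s ≤ (Finsupp.applyAddHom i).ker :=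
    (closure_le _).mpr fun f hf => Finsupp.notMem_support_iff.mp fun h => hi (mem_biUnion hf h)
  obtain ⟨a, ha⟩ := hA d
  refine ⟨Finsupp.single i a, ?_, disjoint_def.mpr ?_⟩
  · rw [← Finsupp.singleAddHom_apply, addOrderOf_injective _ (Finsupp.single_injective i), ha]
  · rintro _ ⟨k, rfl⟩ hk
    have hka : k • a = 0 := by simpa using hker hk
    simp [Finsupp.smul_single, hka]

theorem isDivisible_rat : IsDivisible ℚ := fun n hn q =>
  ⟨q / n, by show n • (q / n) = q; rw [zsmul_eq_mul, mul_div_cancel₀ q (Int.cast_ne_zero.mpr hn)]⟩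

theorem IsDivisible.of_surjective {A B : Type*} [AddCommGroup A] [AddCommGroup B]
    (hA : IsDivisible A) (f : A →+ B) (hf : Surjective f) : IsDivisible B := by
  intro n hn b
  obtain ⟨a, rfl⟩ := hf b
  obtain ⟨a', rfl⟩ := hA n hn a
  exact ⟨f a', (map_zsmul f n a').symm⟩

theorem IsDivisible.prod {A B : Type*} [AddCommGroup A] [AddCommGroup B]
    (hA : IsDivisible A) (hB : IsDivisible B) : IsDivisible (A × B) := by
  intro n hn ⟨a, b⟩
  obtain ⟨a', rfl⟩ := hA n hn a
  obtain ⟨b', rfl⟩ := hB n hn b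
  exact ⟨(a', b'), rfl⟩

end AddCommGroup

abbrev RatModInt : Type := ℚ ⧸ zmultiples (1 : ℚ)

theorem isDivisible_ratModInt : IsDivisible RatModInt :=
  isDivisible_rat.of_surjective (QuotientAddGroup.mk' _) (QuotientAddGroup.mk'_surjective _)

theorem exists_addOrderOf_eq_rat_prod_ratModInt (d : ℕ) :
    ∃ a : ℚ × RatModInt, addOrderOf a = d := by
  rcases Nat.eq_zero_or_pos d with rfl | hd
  · refine ⟨(1, 0), ?_⟩
    simp [Prod.addOrderOf, not_isOfFinAddOrder_of_isAddTorsionFree one_ne_zero]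
  · have : Fact ((0 : ℚ) < 1) := ⟨one_pos⟩
    refine ⟨(0, ((1 / d : ℚ) : RatModInt)), ?_⟩
    simpa [Prod.addOrderOf] using AddCircle.addOrderOf_period_div (p := (1 : ℚ)) hd

theorem mk_finsupp_rat_prod_ratModInt {ι : Type} {κ : Cardinal} (hκ : ℵ₀ ≤ κ) (hι : #ι = κ) :
    #(ι →₀ ℚ × RatModInt) = κ := by
  have : Infinite ι := Cardinal.infinite_iff.mpr (hι ▸ hκ)
  have : Countable RatModInt := (QuotientAddGroup.mk'_surjective _).countable
  rw [mk_finsupp_of_infinite, hι, max_eq_left (mk_le_aleph0.trans hκ)]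

noncomputable def Finsupp.prodAddEquiv (ι A B : Type*) [AddCommGroup A] [AddCommGroup B] :
    (ι →₀ A × B) ≃+ (ι →₀ A) × (ι →₀ B) where
  toFun f := (f.mapRange Prod.fst rfl, f.mapRange Prod.snd rfl)
  invFun g := Finsupp.zipWith Prod.mk rfl g.1 g.2
  left_inv f := by ext <;> simp
  right_inv g := by ext <;> simp
  map_add' f g := by ext <;> simp

def HasFGExtensionProperty (κ : Cardinal.{0}) (M : Type) [AddCommGroup M] : Prop :=
  ∀ M₁ : AddSubgroup M, M₁.FG → ∀ (M₂ : Type) [AddCommGroup M₂], #M₂ ≤ κ →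
    ∀ j : M₁ →+ M₂, Injective j → ∃ e : M₂ →+ M, Injective e ∧ ∀ x : M₁, e (j x) = x

namespace HasFGExtensionProperty

variable {κ : Cardinal.{0}} {M : Type} [AddCommGroup M]

theorem isDivisible (h : HasFGExtensionProperty κ M) (hκ : ℵ₀ ≤ κ) : IsDivisible M := by
  intro n hn x
  set M₁ := zmultiples x
  set x₁ : M₁ := ⟨x, mem_zmultiples x⟩
  -- `(M₁ × ℤ) ⧸ H` is `M₁` with an `n`-th root of `x` adjoined
  set H : AddSubgroup (M₁ × ℤ) := zmultiples (x₁, -n)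
  let j : M₁ →+ (M₁ × ℤ) ⧸ H := (QuotientAddGroup.mk' H).comp (AddMonoidHom.inl M₁ ℤ)
  have hj : Injective j := by
    refine (injective_iff_map_eq_zero j).mpr fun a ha => ?_
    obtain ⟨k, hk⟩ : (a, (0 : ℤ)) ∈ H := (QuotientAddGroup.eq_zero_iff _).mp ha
    have hk0 : k = 0 := by simpa [hn] using congrArg Prod.snd hk
    simpa [hk0] using (congrArg Prod.fst hk).symm
  have : Countable M₁ := mk_le_aleph0_iff.mp <| by
    simpa [M₁, zmultiples_eq_closure] using cardinalMk_closure_le_max {x}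
  obtain ⟨e, -, he⟩ := h M₁ ⟨{x}, by simp [M₁, zmultiples_eq_closure]⟩ _
    ((mk_le_of_surjective (QuotientAddGroup.mk'_surjective H)).trans (mk_le_aleph0.trans hκ)) j hj
  refine ⟨e (QuotientAddGroup.mk ((0 : M₁), (1 : ℤ))), ?_⟩
  have hroot : n • (QuotientAddGroup.mk ((0 : M₁), (1 : ℤ)) : (M₁ × ℤ) ⧸ H) = j x₁ := by
    rw [← QuotientAddGroup.mk_zsmul]
    exact QuotientAddGroup.eq.mpr ⟨1, by ext <;> simp [x₁]⟩
  show n • e _ = x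
  rw [← map_zsmul, hroot, he]

theorem exists_addOrderOf_disjoint_closure_of_finite (h : HasFGExtensionProperty κ M)
    (hκ : ℵ₀ ≤ κ) {s : Set M} (hs : s.Finite) (d : ℕ) :
    ∃ y : M, addOrderOf y = d ∧ Disjoint (zmultiples y) (closure s) := by
  set C := closure s
  have : Countable C :=
    mk_le_aleph0_iff.mp ((cardinalMk_closure_le_max s).trans (max_le hs.lt_aleph0.le le_rfl))
  have : Countable (ZMod d) := ZMod.intCast_surjective.countable
  obtain ⟨e, he, hej⟩ := h C ⟨hs.toFinset, by simp [C]⟩ (C × ZMod d) (mk_le_aleph0.trans hκ)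
    (AddMonoidHom.inl C (ZMod d)) (Prod.mk_left_injective 0)
  refine ⟨e (0, 1), ?_, disjoint_def.mpr ?_⟩
  · rw [addOrderOf_injective e he, ← AddMonoidHom.inr_apply,
      addOrderOf_injective _ (Prod.mk_right_injective 0), ZMod.addOrderOf_one]
  · intro z hz hk
    obtain ⟨k, rfl⟩ := mem_zmultiples_iff.mp hz
    have hk' : k • ((0 : C), (1 : ZMod d)) = (⟨_, hk⟩, 0) :=
      he (by rw [map_zsmul]; exact (hej ⟨_, hk⟩).symm)
    have h0 : (⟨_, hk⟩ : C) = 0 := by simpa using (congrArg Prod.fst hk').symm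
    exact congrArg Subtype.val h0

theorem exists_addOrderOf_disjoint_of_mk_lt (h : HasFGExtensionProperty κ M) (hκ : ℵ₀ ≤ κ)
    {C : AddSubgroup M} (hC : #C < κ) (d : ℕ) :
    ∃ y : M, addOrderOf y = d ∧ Disjoint (zmultiples y) C := by
  obtain ⟨u, hu, -⟩ := h ⊥ ⟨∅, by simp⟩ (κ.out →₀ ℚ × RatModInt)
    (mk_finsupp_rat_prod_ratModInt hκ (mk_out κ)).le 0 (injective_of_subsingleton _)
  obtain ⟨y, hy, hdisj⟩ := HasIndependentCyclics.finsupp hκ (mk_out κ)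
    exists_addOrderOf_eq_rat_prod_ratModInt (u ⁻¹' C)
    ((mk_preimage_of_injective u C hu).trans_lt hC) d
  refine ⟨u y, by rw [addOrderOf_injective u hu, hy], disjoint_def.mpr ?_⟩
  intro z hz hk
  obtain ⟨k, rfl⟩ := mem_zmultiples_iff.mp hz
  rw [← map_zsmul] at hk ⊢
  rw [disjoint_def.mp hdisj (zsmul_mem_zmultiples y k) (subset_closure hk), map_zero]

theorem hasIndependentCyclics (h : HasFGExtensionProperty κ M) (hκ : ℵ₀ ≤ κ) :
    HasIndependentCyclics κ M := by
  intro s hs d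
  rcases hκ.eq_or_lt with rfl | hκ'
  · exact h.exists_addOrderOf_disjoint_closure_of_finite hκ (lt_aleph0_iff_set_finite.mp hs) d
  · exact h.exists_addOrderOf_disjoint_of_mk_lt hκ
      ((cardinalMk_closure_le_max s).trans_lt (max_lt hs hκ')) d

end HasFGExtensionProperty

theorem stmt18 (κ : Cardinal) (hκ : Cardinal.aleph0 ≤ κ)
    (ι : Type) (hι : Cardinal.mk ι = κ)
    (M : Type) [AddCommGroup M] (hM : Cardinal.mk M = κ)
    (hprop : ∀ M₁ : AddSubgroup M, M₁.FG →
      ∀ (M₂ : Type) [AddCommGroup M₂], Cardinal.mk M₂ ≤ κ →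
      ∀ j : M₁ →+ M₂, Function.Injective j →
      ∃ e : M₂ →+ M, Function.Injective e ∧ ∀ x : M₁, e (j x) = (x : M)) :
    Nonempty (M ≃+ ((ι →₀ ℚ) × (ι →₀ (ℚ ⧸ AddSubgroup.zmultiples (1 : ℚ))))) := by
  have hext : HasFGExtensionProperty κ M := hprop
  obtain ⟨e⟩ := nonempty_addEquiv_of_hasIndependentCyclics hκ hM
    (mk_finsupp_rat_prod_ratModInt hκ hι) (hext.isDivisible hκ)
    (isDivisible_rat.prod isDivisible_ratModInt).finsupp (hext.hasIndependentCyclics hκ)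
    (HasIndependentCyclics.finsupp hκ hι exists_addOrderOf_eq_rat_prod_ratModInt)
  exact ⟨e.trans (Finsupp.prodAddEquiv ι ℚ RatModInt)⟩
end
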